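/- Let T ⊆ GL_3(C) be the diagonal torus and consider its action on forms by substitution. For the polynomial c = c1·x2^2x3^3 + c2·x2x3^4 + c3·x1^2x3^3 + c4·x1x3^4 with all c_i nonzero, a diagonal matrix diag(α,β,γ) stabilizes c (i.e. c(αx1,βx2,γx3)=c) if and only if α=β=γ and α^5=1. -/
import Mathlib


open MvPolynomial

noncomputable section

/-- The substitution action of a diagonal matrix `diag(α,β,γ)` on polynomials:
`f(x1,x2,x3) ↦ f(α·x1, β·x2, γ·x3)`. -/
def diagSubst (α β γ : ℂ) : MvPolynomial (Fin 3) ℂ →ₐ[ℂ] MvPolynomial (Fin 3) ℂ :=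
  bind₁ ![C α * X 0, C β * X 1, C γ * X 2]

/-- For the quintic form `c = c1·x2²x3³ + c2·x2x3⁴ + c3·x1²x3³ + c4·x1x3⁴` with all `c_i`
nonzero, a diagonal matrix `diag(α,β,γ)` of the torus `T ⊆ GL₃(ℂ)` stabilizes `c` under the
substitution action if and only if `α = β = γ` and `α⁵ = 1`. -/
theorem diag_stabilizer_of_quintic (c₁ c₂ c₃ c₄ : ℂ)
    (h₁ : c₁ ≠ 0) (h₂ : c₂ ≠ 0) (h₃ : c₃ ≠ 0) (h₄ : c₄ ≠ 0)
    (α β γ : ℂ) (hα : α ≠ 0) (hβ : β ≠ 0) (hγ : γ ≠ 0) :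
    let c : MvPolynomial (Fin 3) ℂ :=
      C c₁ * X 1 ^ 2 * X 2 ^ 3 + C c₂ * X 1 * X 2 ^ 4 +
      C c₃ * X 0 ^ 2 * X 2 ^ 3 + C c₄ * X 0 * X 2 ^ 4
    diagSubst α β γ c = c ↔ (α = β ∧ β = γ ∧ α ^ 5 = 1) := by

  intro c
  constructor
  · intro h
    have key : ∀ x y z : ℂ,
        c₁ * (β * y) ^ 2 * (γ * z) ^ 3 + c₂ * (β * y) * (γ * z) ^ 4 +
        c₃ * (α * x) ^ 2 * (γ * z) ^ 3 + c₄ * (α * x) * (γ * z) ^ 4 =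
        c₁ * y ^ 2 * z ^ 3 + c₂ * y * z ^ 4 + c₃ * x ^ 2 * z ^ 3 + c₄ * x * z ^ 4 := by
      intro x y z
      have := congrArg (eval ![x, y, z]) h
      simpa [c, diagSubst, map_mul, map_pow, bind₁_X_right, bind₁_C_right] using this
    have e1 := key 0 1 1
    have e2 := key 0 1 (-1)
    have e3 := key 1 0 1
    have e4 := key 1 0 (-1)
    have q1 : β ^ 2 * γ ^ 3 = 1 := by
      have : c₁ * (β ^ 2 * γ ^ 3) = c₁ * 1 := by linear_combination e1 / 2 - e2 / 2
      exact mul_left_cancel₀ h₁ this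
    have q2 : β * γ ^ 4 = 1 := by
      have : c₂ * (β * γ ^ 4) = c₂ * 1 := by linear_combination e1 / 2 + e2 / 2
      exact mul_left_cancel₀ h₂ this
    have q3 : α ^ 2 * γ ^ 3 = 1 := by
      have : c₃ * (α ^ 2 * γ ^ 3) = c₃ * 1 := by linear_combination e3 / 2 - e4 / 2
      exact mul_left_cancel₀ h₃ this
    have q4 : α * γ ^ 4 = 1 := by
      have : c₄ * (α * γ ^ 4) = c₄ * 1 := by linear_combination e3 / 2 + e4 / 2
      exact mul_left_cancel₀ h₄ this
    have hab : α = β := by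
      have : α * γ ^ 4 = β * γ ^ 4 := by rw [q4, q2]
      exact mul_right_cancel₀ (pow_ne_zero 4 hγ) this
    have hbc : β = γ := by
      have hne : β * γ ^ 3 ≠ 0 := mul_ne_zero hβ (pow_ne_zero 3 hγ)
      have : β * (β * γ ^ 3) = γ * (β * γ ^ 3) := by linear_combination q1 - q2
      exact mul_right_cancel₀ hne this
    refine ⟨hab, hbc, ?_⟩
    rw [hab, hbc]
    rw [hbc] at q1
    linear_combination q1
  · rintro ⟨rfl, rfl, h5⟩
    have hC : (C α : MvPolynomial (Fin 3) ℂ) ^ 5 = 1 := by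
      rw [← map_pow, h5, map_one]
    show diagSubst α α α c = c
    simp only [c, diagSubst, map_add, map_mul, map_pow, bind₁_X_right, bind₁_C_right]
    simp only [Matrix.cons_val_zero, Matrix.cons_val_one, Matrix.head_cons, Matrix.cons_val_two, Matrix.tail_cons]
    linear_combination (C c₁ * X 1 ^ 2 * X 2 ^ 3 + C c₂ * X 1 * X 2 ^ 4 +
      C c₃ * X 0 ^ 2 * X 2 ^ 3 + C c₄ * X 0 * X 2 ^ 4) * hC

end
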